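/- arXiv:2404.19104 — 2 statements merged into one kernel-verified Lean document; each statement's English description precedes it below -/
import Mathlib

section
/- There exists a function m : ℕ × ℕ → ℕ satisfying all of the following: (M1) for all i, j ∈ ℕ, m(i,j) ∈ H_i; (M2) for all i, j ∈ ℕ, 2^(⌊m(i,j)/4⌋) > (p_i(p_j(m(i,j))))² + p_i(p_j(m(i,j))) + 1; (M3) for all i, j, i', j' ∈ ℕ, if m(i,j) > m(i',j') then m(i,j) > p_{i'}(p_{j'}(m(i',j'))). -/
def e : ℕ → ℕ
  | 0 => 2
  | i + 1 => 2 ^ e i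

def H (i : ℕ) : Set ℕ := {n | ∃ j : ℕ, n = e (2 ^ i * 3 ^ j)}

def p (i : ℕ) : ℕ → ℕ := fun n => n ^ i + i

lemma e_two_le (n : ℕ) : 2 ≤ e n := by
  cases n with
  | zero => exact le_refl 2
  | succ k =>
    show 2 ≤ 2 ^ e k
    calc 2 = 2 ^ 1 := rfl
      _ ≤ 2 ^ e k := Nat.pow_le_pow_right (by norm_num) (by have := e_two_le k; omega)

lemma e_strictMono : StrictMono e := by
  apply strictMono_nat_of_lt_succ
  intro n
  exact Nat.lt_two_pow_self (n := e n)

lemma e_ge (n : ℕ) : n + 2 ≤ e n := by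
  induction n with
  | zero => exact le_refl 2
  | succ k ih =>
    show k + 3 ≤ 2 ^ e k
    have h1 : k + 2 < 2 ^ (k + 2) := Nat.lt_two_pow_self (n := k + 2)
    have h2 : 2 ^ (k + 2) ≤ 2 ^ e k := Nat.pow_le_pow_right (by norm_num) ih
    omega

lemma two_mul_add_two_le : ∀ M : ℕ, 4 ≤ M → 2 * M + 2 ≤ 2 ^ M := by
  intro M hM
  induction M, hM using Nat.le_induction with
  | base => norm_num
  | succ k hk ih =>
    have h2 : 2 ≤ 2 ^ k := Nat.one_lt_two_pow (by omega)
    rw [pow_succ]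
    omega

lemma p_le (i N : ℕ) (h2 : 2 ≤ N) (hi : i ≤ N) : p i N ≤ N ^ (i + 1) := by
  cases i with
  | zero => simpa [p] using (by omega : 1 ≤ N)
  | succ s =>
    have hN : N ≤ N ^ (s + 1) := Nat.le_self_pow (by omega) N
    have hmul : N ^ (s + 1) * 2 ≤ N ^ (s + 1) * N := Nat.mul_le_mul_left _ h2
    have hps : p (s + 1) N = N ^ (s + 1) + (s + 1) := rfl
    have heq : N ^ (s + 1 + 1) = N ^ (s + 1) * N := by ring
    omega

lemma pp_le (i j m : ℕ) (h2 : 2 ≤ m) (hi : i ≤ m) (hj : j ≤ m) :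
    p i (p j m) ≤ m ^ ((i + 1) * (j + 1)) := by
  have h1 : p j m ≤ m ^ (j + 1) := p_le j m h2 hj
  have h2' : 2 ≤ m ^ (j + 1) := le_trans h2 (Nat.le_self_pow (by omega) m)
  have hi' : i ≤ m ^ (j + 1) := le_trans hi (Nat.le_self_pow (by omega) m)
  have hmono : p i (p j m) ≤ p i (m ^ (j + 1)) :=
    Nat.add_le_add_right (Nat.pow_le_pow_left h1 i) i
  calc p i (p j m) ≤ p i (m ^ (j + 1)) := hmono
    _ ≤ (m ^ (j + 1)) ^ (i + 1) := p_le i _ h2' hi'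
    _ = m ^ ((i + 1) * (j + 1)) := by rw [← pow_mul, Nat.mul_comm]

lemma key (b E : ℕ) (hE : E ≤ e (b + 1)) : e (b + 2) * E < 2 ^ (e (b + 2) - 2) := by
  have hM4 : 4 ≤ e (b + 1) := by
    have h1 : e 1 ≤ e (b + 1) := e_strictMono.monotone (by omega)
    have h2 : e 1 = 4 := rfl
    omega
  set M := e (b + 1) with hM
  have hN : e (b + 2) = 2 ^ M := rfl
  obtain ⟨c, hc⟩ : ∃ c, 2 ^ M = 2 * M + 2 + c :=
    ⟨2 ^ M - (2 * M + 2), by have := two_mul_add_two_le M hM4; omega⟩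
  have hsub : e (b + 2) - 2 = 2 * M + c := by rw [hN]; omega
  have h1 : M < 2 ^ (M + c) :=
    lt_of_lt_of_le (Nat.lt_two_pow_self (n := M)) (Nat.pow_le_pow_right (by norm_num) (by omega))
  calc e (b + 2) * E ≤ 2 ^ M * M := by
        rw [hN]; exact Nat.mul_le_mul_left _ (le_trans hE (le_refl M))
    _ < 2 ^ M * 2 ^ (M + c) := mul_lt_mul_of_pos_left h1 (by positivity)
    _ = 2 ^ (2 * M + c) := by rw [← pow_add]; ring_nf
    _ = 2 ^ (e (b + 2) - 2) := by rw [hsub]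

lemma succ_le_three_pow : ∀ j : ℕ, j + 1 ≤ 3 ^ j := by
  intro j
  induction j with
  | zero => norm_num
  | succ k ih =>
    have h1 : 3 * (k + 1) ≤ 3 * 3 ^ k := Nat.mul_le_mul_left 3 ih
    have h2 : 3 ^ (k + 1) = 3 * 3 ^ k := by ring
    omega

lemma a_lb (i j : ℕ) : 9 * ((i + 1) * (j + 1)) ≤ 2 ^ i * 3 ^ (j + 2) := by
  have h1 : i + 1 ≤ 2 ^ i := Nat.lt_two_pow_self (n := i)
  have h2 : j + 1 ≤ 3 ^ j := succ_le_three_pow j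
  have h3 : (i + 1) * (9 * (j + 1)) ≤ 2 ^ i * (9 * 3 ^ j) :=
    Nat.mul_le_mul h1 (Nat.mul_le_mul_left 9 h2)
  calc 9 * ((i + 1) * (j + 1)) = (i + 1) * (9 * (j + 1)) := by ring
    _ ≤ 2 ^ i * (9 * 3 ^ j) := h3
    _ = 2 ^ i * 3 ^ (j + 2) := by ring

lemma main_bound (i j : ℕ) :
    (p i (p j (e (2 ^ i * 3 ^ (j + 2))))) ^ 2 + p i (p j (e (2 ^ i * 3 ^ (j + 2)))) + 1
      < 2 ^ (e (2 ^ i * 3 ^ (j + 2)) / 4) ∧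
    p i (p j (e (2 ^ i * 3 ^ (j + 2)))) < 2 ^ e (2 ^ i * 3 ^ (j + 2)) := by
  set a := 2 ^ i * 3 ^ (j + 2) with ha
  have halb := a_lb i j
  have hA1 : 1 ≤ (i + 1) * (j + 1) := Nat.one_le_iff_ne_zero.mpr (by positivity)
  have ha9 : 9 ≤ a := le_trans (Nat.le_mul_of_pos_right 9 (by omega)) halb
  obtain ⟨b, hb⟩ : ∃ b, a = b + 3 := ⟨a - 3, by omega⟩
  set A := (i + 1) * (j + 1) with hAdef
  set E := 2 * A + 1 with hEdef
  have hEa : E ≤ a := by omega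
  have hea : a + 2 ≤ e a := e_ge a
  have hE : E ≤ e (b + 1) := by
    have := e_ge (b + 1)
    omega
  set N := e (b + 2) with hNdef
  have hN4 : 4 ≤ N := by
    have := e_ge (b + 2)
    omega
  have hma : e a = 2 ^ N := by rw [hb]; rfl
  have hm2 : 2 ≤ e a := e_two_le a
  have hia : i ≤ e a := by
    have h1 : i + 1 ≤ 2 ^ i := Nat.lt_two_pow_self (n := i)
    have h2 : 2 ^ i ≤ a := by
      have : 1 ≤ 3 ^ (j + 2) := Nat.one_le_pow _ _ (by norm_num)
      calc 2 ^ i = 2 ^ i * 1 := by ring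
        _ ≤ 2 ^ i * 3 ^ (j + 2) := Nat.mul_le_mul_left _ this
    omega
  have hja : j ≤ e a := by
    have h0 : j + 1 ≤ (i + 1) * (j + 1) := Nat.le_mul_of_pos_left (j + 1) (by omega)
    have h2 : j + 1 ≤ a := by
      have h1 : (i + 1) * (j + 1) ≤ 9 * ((i + 1) * (j + 1)) := by omega
      omega
    omega
  set P := p i (p j (e a)) with hPdef
  have hP : P ≤ (e a) ^ A := pp_le i j (e a) hm2 hia hja
  have hkey : N * E < 2 ^ (N - 2) := key b E hE
  -- P ^ 2 + P + 1 ≤ (e a) ^ E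
  have h2A : P ^ 2 ≤ (e a) ^ (2 * A) := by
    calc P ^ 2 ≤ ((e a) ^ A) ^ 2 := Nat.pow_le_pow_left hP 2
      _ = (e a) ^ (2 * A) := by rw [← pow_mul, Nat.mul_comm]
  have hPle2A : P ≤ (e a) ^ (2 * A) :=
    hP.trans (Nat.pow_le_pow_right (by omega) (by omega))
  have hone : 1 ≤ (e a) ^ (2 * A) := Nat.one_le_pow _ _ (by omega)
  have h3ea : 3 ≤ e a := by omega
  have hmul3 : 3 * (e a) ^ (2 * A) ≤ (e a) * (e a) ^ (2 * A) :=
    Nat.mul_le_mul_right _ h3ea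
  have hEeq : (e a) ^ E = (e a) * (e a) ^ (2 * A) := by
    rw [hEdef, pow_succ, Nat.mul_comm]
  have hPsum : P ^ 2 + P + 1 ≤ (e a) ^ E := by
    rw [hEeq]; omega
  have hexpE : (e a) ^ E = 2 ^ (N * E) := by rw [hma, ← pow_mul]
  constructor
  · -- M2 part
    obtain ⟨d, hd⟩ : ∃ d, N = d + 2 := ⟨N - 2, by omega⟩
    have hdiv : e a / 4 = 2 ^ (N - 2) := by
      rw [hma, hd]
      have : (2 : ℕ) ^ (d + 2) = 2 ^ d * 4 := by ring
      rw [this]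
      simp
    have hlt : 2 ^ (N * E) < 2 ^ (2 ^ (N - 2)) :=
      Nat.pow_lt_pow_right (by norm_num) hkey
    calc P ^ 2 + P + 1 ≤ 2 ^ (N * E) := by rw [← hexpE]; exact hPsum
      _ < 2 ^ (2 ^ (N - 2)) := hlt
      _ = 2 ^ (e a / 4) := by rw [hdiv]
  · -- M3 part
    have hNA : N * A < 2 ^ N := by
      have h1 : N * A ≤ N * E := Nat.mul_le_mul_left _ (by omega)
      have h2 : 2 ^ (N - 2) ≤ 2 ^ N := Nat.pow_le_pow_right (by norm_num) (by omega)
      omega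
    calc P ≤ (e a) ^ A := hP
      _ = 2 ^ (N * A) := by rw [hma, ← pow_mul]
      _ < 2 ^ (2 ^ N) := Nat.pow_lt_pow_right (by norm_num) hNA
      _ = 2 ^ (e a) := by rw [hma]

theorem stmt_10 : ∃ m : ℕ × ℕ → ℕ,
    (∀ i j : ℕ, m (i, j) ∈ H i) ∧
    (∀ i j : ℕ,
      2 ^ (m (i, j) / 4) > (p i (p j (m (i, j)))) ^ 2 + p i (p j (m (i, j))) + 1) ∧
    (∀ i j i' j' : ℕ,
      m (i, j) > m (i', j') → m (i, j) > p i' (p j' (m (i', j')))) := by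
  refine ⟨fun q => e (2 ^ q.1 * 3 ^ (q.2 + 2)), ?_, ?_, ?_⟩
  · intro i j
    exact ⟨j + 2, rfl⟩
  · intro i j
    exact (main_bound i j).1
  · intro i j i' j' hgt
    simp only at hgt ⊢
    have hlt : 2 ^ i' * 3 ^ (j' + 2) < 2 ^ i * 3 ^ (j + 2) :=
      e_strictMono.lt_iff_lt.mp hgt
    have h1 : e (2 ^ i' * 3 ^ (j' + 2) + 1) ≤ e (2 ^ i * 3 ^ (j + 2)) :=
      e_strictMono.monotone (by omega)
    have h2 : e (2 ^ i' * 3 ^ (j' + 2) + 1) = 2 ^ e (2 ^ i' * 3 ^ (j' + 2)) := rfl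
    have h3 := (main_bound i' j').2
    omega
end

section
/- Let α be a type with decidable equality, let p ∈ ℕ, let X be a Finset in α with |X| ≥ p² + p + 1, and let Q : α → Finset α satisfy, for every x ∈ X, both |Q(x)| ≤ p and x ∈ Q(x). Then there exist y, z ∈ X with y ≠ z, y ∉ Q(z), and z ∉ Q(y). (Combinatorial core of the construction: among sufficiently many candidate words, each of whose associated accepting computations queries at most p words including the candidate itself, there exist two candidates neither of which is queried by the other's computation.) -/
/-!
Double counting the incidences `y ∈ Q z` shows that some `y ∈ X` lies in at most `p` of the sets
`Q z`. Together with `Q y` itself this excludes at most `2 * p` elements of `X`, and as soon as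
`X` is larger than that, any remaining `z` works; it differs from `y` because `y ∈ Q y`.
-/

open Finset

namespace Finset

variable {α : Type*} [DecidableEq α] {p : ℕ} {X : Finset α} {Q : α → Finset α}

theorem exists_card_filter_mem_le (hX : X.Nonempty) (hQ : ∀ x ∈ X, #(Q x) ≤ p) :
    ∃ y ∈ X, #{z ∈ X | y ∈ Q z} ≤ p := by
  refine exists_le_of_sum_le hX ?_
  calc ∑ y ∈ X, #{z ∈ X | y ∈ Q z}
      = ∑ z ∈ X, #{y ∈ X | y ∈ Q z} :=
        sum_card_bipartiteAbove_eq_sum_card_bipartiteBelow (fun y z => y ∈ Q z)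
    _ ≤ ∑ _z ∈ X, p := sum_le_sum fun z hz =>
        (card_le_card fun _ hy => (mem_filter.mp hy).2).trans (hQ z hz)

theorem exists_pair_notMem_of_two_mul_lt_card (hX : 2 * p < #X)
    (hQ : ∀ x ∈ X, #(Q x) ≤ p ∧ x ∈ Q x) :
    ∃ y ∈ X, ∃ z ∈ X, y ≠ z ∧ y ∉ Q z ∧ z ∉ Q y := by
  obtain ⟨y, hyX, hy⟩ :=
    exists_card_filter_mem_le (card_pos.mp (by omega)) fun x hx => (hQ x hx).1
  have hexcluded : #({z ∈ X | y ∈ Q z} ∪ Q y) < #X :=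
    calc #({z ∈ X | y ∈ Q z} ∪ Q y) ≤ #{z ∈ X | y ∈ Q z} + #(Q y) := card_union_le _ _
      _ < #X := by linarith [(hQ y hyX).1]
  obtain ⟨z, hzX, hz⟩ := exists_mem_notMem_of_card_lt_card hexcluded
  rw [mem_union, mem_filter, not_or, not_and] at hz
  exact ⟨y, hyX, z, hzX, fun hyz => hz.2 (hyz ▸ (hQ y hyX).2), hz.1 hzX, hz.2⟩

end Finset

theorem stmt_12 {α : Type*} [DecidableEq α] (p : ℕ) (X : Finset α)
    (Q : α → Finset α)
    (hX : X.card ≥ p ^ 2 + p + 1)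
    (hQ : ∀ x ∈ X, (Q x).card ≤ p ∧ x ∈ Q x) :
    ∃ y ∈ X, ∃ z ∈ X, y ≠ z ∧ y ∉ Q z ∧ z ∉ Q y :=
  exists_pair_notMem_of_two_mul_lt_card (by nlinarith) hQ
end
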